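/- arXiv:1907.08289 — 4 statements merged into one kernel-verified Lean document; each statement's English description precedes it below -/
import Mathlib

section
/- Let V(x) = ½ xᵀ P x with P symmetric positive definite, and consider the interconnected subsystem ẋ = Ā x + B u + Σ_{j∈N} H_j (y_j − y) with output y = C x, where y_j ∈ ℝˡ are external signals. If for some ε_{ii} > 0, ρ ≥ 0, and ε_j > 0 (j ∈ N) the matrix M′ := Āᵀ P + P Ā + ρ Cᵀ C + (1/ε_{ii})(P B − Cᵀ)(P B − Cᵀ)ᵀ − Σ_{j∈N} (P H_j C + Cᵀ H_jᵀ P − (1/ε_j) P H_j H_jᵀ P) is negative semidefinite, then V̇ ≤ uᵀ y + (ε_{ii}/2)‖u‖² − (ρ/2)‖y‖² + ½ Σ_{j∈N} ε_j ‖y_j‖². -/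
open Matrix

private lemma dotT' {n m : ℕ} (A : Matrix (Fin n) (Fin m) ℝ) (v : Fin n → ℝ) (w : Fin m → ℝ) :
    v ⬝ᵥ A.mulVec w = Aᵀ.mulVec v ⬝ᵥ w := by
  rw [Matrix.dotProduct_mulVec, ← Matrix.vecMul_transpose]; simp

private lemma dotSq_nonneg' {m : ℕ} (w : Fin m → ℝ) : 0 ≤ w ⬝ᵥ w :=
  Finset.sum_nonneg fun _ _ => mul_self_nonneg _

private lemma young' {m : ℕ} (ε : ℝ) (hε : 0 < ε) (a b : Fin m → ℝ) :
    a ⬝ᵥ b ≤ (ε/2) * (a ⬝ᵥ a) + (1/(2*ε)) * (b ⬝ᵥ b) := by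
  have h := dotSq_nonneg' (ε • a - b)
  have h2 : (ε • a - b) ⬝ᵥ (ε • a - b)
      = ε^2 * (a ⬝ᵥ a) - 2*ε*(a ⬝ᵥ b) + b ⬝ᵥ b := by
    simp [sub_dotProduct, dotProduct_sub, smul_dotProduct,
      dotProduct_smul, smul_eq_mul, dotProduct_comm b a]
    ring
  rw [h2] at h
  have h3 := mul_le_mul_of_nonneg_left h (le_of_lt (by positivity : (0:ℝ) < 1/(2*ε)))
  rw [← sub_nonneg]
  have : ε/2 * (a ⬝ᵥ a) + 1/(2*ε) * (b ⬝ᵥ b) - a ⬝ᵥ b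
      = 1/(2*ε) * (ε^2 * (a ⬝ᵥ a) - 2*ε*(a ⬝ᵥ b) + b ⬝ᵥ b) := by
    field_simp; ring
  rw [this]; linarith [h3]

private lemma sumMV' {n m k : ℕ} (s : Finset (Fin k)) (A : Fin k → Matrix (Fin n) (Fin m) ℝ)
    (v : Fin m → ℝ) : (∑ j ∈ s, A j).mulVec v = ∑ j ∈ s, (A j).mulVec v := by
  classical
  induction s using Finset.induction with
  | empty => simp
  | insert _ _ h ih => simp [Finset.sum_insert h, Matrix.add_mulVec, ih]

private lemma sumDot' {m k : ℕ} (s : Finset (Fin k)) (v : Fin m → ℝ) (w : Fin k → Fin m → ℝ) :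
    (∑ j ∈ s, w j) ⬝ᵥ v = ∑ j ∈ s, w j ⬝ᵥ v := by
  simp [dotProduct, Finset.sum_apply, Finset.sum_mul]
  exact Finset.sum_comm

private lemma dotSum' {m k : ℕ} (s : Finset (Fin k)) (v : Fin m → ℝ) (w : Fin k → Fin m → ℝ) :
    v ⬝ᵥ (∑ j ∈ s, w j) = ∑ j ∈ s, v ⬝ᵥ w j := by
  simp [dotProduct, Finset.sum_apply, Finset.mul_sum]
  exact Finset.sum_comm

private lemma quadid' {n l k : ℕ} (Abar P : Matrix (Fin n) (Fin n) ℝ)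
    (B : Matrix (Fin n) (Fin l) ℝ) (C : Matrix (Fin l) (Fin n) ℝ)
    (N : Finset (Fin k)) (H : Fin k → Matrix (Fin n) (Fin l) ℝ)
    (hPT : Pᵀ = P) (εii ρ : ℝ) (εj : Fin k → ℝ) (z : Fin n → ℝ) :
    z ⬝ᵥ (-(Abarᵀ * P + P * Abar + ρ • (Cᵀ * C) +
        εii⁻¹ • ((P * B - Cᵀ) * (P * B - Cᵀ)ᵀ) -
        ∑ j ∈ N, (P * H j * C + Cᵀ * (H j)ᵀ * P -
          (εj j)⁻¹ • (P * H j * (H j)ᵀ * P)))).mulVec z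
    = -2 * ((Abar.mulVec z) ⬝ᵥ P.mulVec z) - ρ * (C.mulVec z ⬝ᵥ C.mulVec z)
      - εii⁻¹ * ((Bᵀ.mulVec (P.mulVec z) - C.mulVec z) ⬝ᵥ (Bᵀ.mulVec (P.mulVec z) - C.mulVec z))
      + ∑ j ∈ N, (2 * (C.mulVec z ⬝ᵥ (H j)ᵀ.mulVec (P.mulVec z))
          - (εj j)⁻¹ * ((H j)ᵀ.mulVec (P.mulVec z) ⬝ᵥ (H j)ᵀ.mulVec (P.mulVec z))) := by
  set p := P.mulVec z with hp
  set y := C.mulVec z with hy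
  have e1 : z ⬝ᵥ (Abarᵀ * P).mulVec z = Abar.mulVec z ⬝ᵥ p := by
    rw [← Matrix.mulVec_mulVec, dotT']; simp [hp]
  have e2 : z ⬝ᵥ (P * Abar).mulVec z = Abar.mulVec z ⬝ᵥ p := by
    rw [← Matrix.mulVec_mulVec, dotT', hPT, dotProduct_comm]
  have e3 : z ⬝ᵥ (Cᵀ * C).mulVec z = y ⬝ᵥ y := by
    rw [← Matrix.mulVec_mulVec, dotT']; simp [hy]
  have e4 : z ⬝ᵥ ((P * B - Cᵀ) * (P * B - Cᵀ)ᵀ).mulVec z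
      = (Bᵀ.mulVec p - y) ⬝ᵥ (Bᵀ.mulVec p - y) := by
    rw [← Matrix.mulVec_mulVec, dotT']
    congr 1 <;>
    · simp [Matrix.transpose_sub, Matrix.transpose_mul, hPT, Matrix.sub_mulVec,
        Matrix.mulVec_mulVec, hp, hy]
  have e5 : ∀ j, z ⬝ᵥ (P * H j * C).mulVec z = y ⬝ᵥ (H j)ᵀ.mulVec p := by
    intro j
    rw [← Matrix.mulVec_mulVec, ← Matrix.mulVec_mulVec, dotT', hPT, dotT',
      dotProduct_comm]
  have e6 : ∀ j, z ⬝ᵥ (Cᵀ * (H j)ᵀ * P).mulVec z = y ⬝ᵥ (H j)ᵀ.mulVec p := by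
    intro j
    rw [← Matrix.mulVec_mulVec, ← Matrix.mulVec_mulVec, dotT']
    simp [hy, hp]
  have e7 : ∀ j, z ⬝ᵥ (P * H j * (H j)ᵀ * P).mulVec z
      = (H j)ᵀ.mulVec p ⬝ᵥ (H j)ᵀ.mulVec p := by
    intro j
    rw [show P * H j * (H j)ᵀ * P = (P * H j) * ((H j)ᵀ * P) from Matrix.mul_assoc _ _ _,
      ← Matrix.mulVec_mulVec, dotT']
    congr 1
    · simp [Matrix.transpose_mul, hPT, Matrix.mulVec_mulVec, hp]
    · simp [Matrix.mulVec_mulVec, hp]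
  simp only [Matrix.neg_mulVec, dotProduct_neg, Matrix.sub_mulVec, Matrix.add_mulVec,
    Matrix.smul_mulVec, dotProduct_sub, dotProduct_add,
    dotProduct_smul, smul_eq_mul, sumMV', dotSum', e1, e2, e3, e4, e5, e6, e7]
  rw [Finset.sum_congr rfl (fun j _ => by ring :
    ∀ j ∈ N, (y ⬝ᵥ (H j)ᵀ.mulVec p + y ⬝ᵥ (H j)ᵀ.mulVec p
      - (εj j)⁻¹ * ((H j)ᵀ.mulVec p ⬝ᵥ (H j)ᵀ.mulVec p))
    = (2 * (y ⬝ᵥ (H j)ᵀ.mulVec p) - (εj j)⁻¹ * ((H j)ᵀ.mulVec p ⬝ᵥ (H j)ᵀ.mulVec p)))]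
  ring

private lemma derivV' {n : ℕ} (P : Matrix (Fin n) (Fin n) ℝ) (x : ℝ → Fin n → ℝ)
    (d : Fin n → ℝ) (t : ℝ) (hx : ∀ i, HasDerivAt (fun s => x s i) (d i) t) :
    HasDerivAt (fun s => x s ⬝ᵥ P.mulVec (x s))
      (d ⬝ᵥ P.mulVec (x t) + x t ⬝ᵥ P.mulVec d) t := by
  have key : ∀ s, x s ⬝ᵥ P.mulVec (x s) = ∑ i, ∑ j, x s i * (P i j * x s j) := by
    intro s
    simp [dotProduct, Matrix.mulVec, Finset.mul_sum]
  have h1 : HasDerivAt (fun s => ∑ i, ∑ j, x s i * (P i j * x s j))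
      (∑ i, ∑ j, (d i * (P i j * x t j) + x t i * (P i j * d j))) t := by
    apply HasDerivAt.fun_sum; intro i _
    apply HasDerivAt.fun_sum; intro j _
    exact (hx i).mul ((hx j).const_mul (P i j))
  have h2 : (∑ i, ∑ j, (d i * (P i j * x t j) + x t i * (P i j * d j)))
      = d ⬝ᵥ P.mulVec (x t) + x t ⬝ᵥ P.mulVec d := by
    simp [dotProduct, Matrix.mulVec, Finset.mul_sum, Finset.sum_add_distrib]
  rw [← h2]
  exact h1.congr_of_eventuallyEq (by filter_upwards with s; rw [key s])

/-- Lemma 1 of the paper: for the interconnected subsystem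
`ẋ = Āx + Bu + Σ_{j∈N} H_j (y_j − y)`, `y = Cx`, if the matrix
`M′ = ĀᵀP + PĀ + ρCᵀC + (1/ε_{ii})(PB−Cᵀ)(PB−Cᵀ)ᵀ
      − Σ_{j∈N}(P H_j C + Cᵀ H_jᵀ P − (1/ε_j) P H_j H_jᵀ P)`
is negative semidefinite, then
`V̇ ≤ uᵀy + (ε_{ii}/2)‖u‖² − (ρ/2)‖y‖² + ½Σ_{j∈N} ε_j ‖y_j‖²` for `V = ½xᵀPx`. -/
theorem stmt3 {n l k : ℕ} (Abar P : Matrix (Fin n) (Fin n) ℝ)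
    (B : Matrix (Fin n) (Fin l) ℝ) (C : Matrix (Fin l) (Fin n) ℝ)
    (N : Finset (Fin k)) (H : Fin k → Matrix (Fin n) (Fin l) ℝ)
    (hP : P.PosDef) (εii ρ : ℝ) (εj : Fin k → ℝ)
    (hεii : 0 < εii) (hρ : 0 ≤ ρ) (hεj : ∀ j ∈ N, 0 < εj j)
    (hM' : (-(Abarᵀ * P + P * Abar + ρ • (Cᵀ * C) +
        εii⁻¹ • ((P * B - Cᵀ) * (P * B - Cᵀ)ᵀ) -
        ∑ j ∈ N, (P * H j * C + Cᵀ * (H j)ᵀ * P -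
          (εj j)⁻¹ • (P * H j * (H j)ᵀ * P)))).PosSemidef)
    (x : ℝ → Fin n → ℝ) (u : ℝ → Fin l → ℝ) (yext : Fin k → ℝ → Fin l → ℝ)
    (hx : ∀ t i, HasDerivAt (fun s => x s i)
        ((Abar.mulVec (x t) + B.mulVec (u t) +
          ∑ j ∈ N, (H j).mulVec (yext j t - C.mulVec (x t))) i) t) :
    ∀ t, deriv (fun s => (1 / 2) * (x s ⬝ᵥ P.mulVec (x s))) t ≤
      u t ⬝ᵥ C.mulVec (x t) + (εii / 2) * (u t ⬝ᵥ u t)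
        - (ρ / 2) * (C.mulVec (x t) ⬝ᵥ C.mulVec (x t))
        + (1 / 2) * ∑ j ∈ N, εj j * (yext j t ⬝ᵥ yext j t) := by
  intro t
  have hPT : Pᵀ = P := by simpa using hP.1.eq
  set z := x t with hz
  set d : Fin n → ℝ := Abar.mulVec z + B.mulVec (u t) +
      ∑ j ∈ N, (H j).mulVec (yext j t - C.mulVec z) with hd
  set p := P.mulVec z with hp
  set y := C.mulVec z with hy
  -- derivative computation
  have hder : HasDerivAt (fun s => (1 / 2) * (x s ⬝ᵥ P.mulVec (x s)))
      ((1/2) * (d ⬝ᵥ p + z ⬝ᵥ P.mulVec d)) t :=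
    (derivV' P x d t (fun i => hx t i)).const_mul (1/2)
  have hsymm : z ⬝ᵥ P.mulVec d = d ⬝ᵥ p := by
    rw [dotT', hPT, dotProduct_comm]
  have hderiv : deriv (fun s => (1 / 2) * (x s ⬝ᵥ P.mulVec (x s))) t = d ⬝ᵥ p := by
    rw [hder.deriv, hsymm]; ring
  rw [hderiv]
  -- expand V̇
  have hVdot : d ⬝ᵥ p = Abar.mulVec z ⬝ᵥ p + u t ⬝ᵥ Bᵀ.mulVec p
      + ∑ j ∈ N, ((yext j t - y) ⬝ᵥ (H j)ᵀ.mulVec p) := by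
    have hBu : B.mulVec (u t) ⬝ᵥ p = u t ⬝ᵥ Bᵀ.mulVec p := by
      rw [dotProduct_comm, dotT', dotProduct_comm]
    have hHj : ∀ j, (H j).mulVec (yext j t - y) ⬝ᵥ p
        = (yext j t - y) ⬝ᵥ (H j)ᵀ.mulVec p := by
      intro j
      rw [dotProduct_comm, dotT', dotProduct_comm]
    rw [hd]
    simp only [add_dotProduct, sumDot', hBu]
    rw [Finset.sum_congr rfl fun j _ => hHj j]
  -- quadratic form inequality
  have h0 : (0:ℝ) ≤ z ⬝ᵥ (-(Abarᵀ * P + P * Abar + ρ • (Cᵀ * C) +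
        εii⁻¹ • ((P * B - Cᵀ) * (P * B - Cᵀ)ᵀ) -
        ∑ j ∈ N, (P * H j * C + Cᵀ * (H j)ᵀ * P -
          (εj j)⁻¹ • (P * H j * (H j)ᵀ * P)))).mulVec z := by
    simpa using hM'.dotProduct_mulVec_nonneg z
  rw [quadid' Abar P B C N H hPT εii ρ εj z] at h0
  rw [← hp, ← hy] at h0
  set q := Bᵀ.mulVec p with hq
  set v : Fin k → Fin l → ℝ := fun j => (H j)ᵀ.mulVec p with hv
  -- Young for u
  have hyu : u t ⬝ᵥ (q - y) ≤ (εii/2) * (u t ⬝ᵥ u t) + (1/(2*εii)) * ((q-y) ⬝ᵥ (q-y)) :=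
    young' εii hεii _ _
  -- sum bound
  have hsum : ∑ j ∈ N, ((yext j t - y) ⬝ᵥ v j)
      ≤ ∑ j ∈ N, ((εj j/2) * (yext j t ⬝ᵥ yext j t)
          - (1/2) * (2 * (y ⬝ᵥ v j) - (εj j)⁻¹ * (v j ⬝ᵥ v j))) := by
    apply Finset.sum_le_sum
    intro j hj
    have hy2 := young' (εj j) (hεj j hj) (yext j t) (v j)
    have hne : εj j ≠ 0 := ne_of_gt (hεj j hj)
    have : (1:ℝ)/(2*εj j) = (εj j)⁻¹/2 := by field_simp
    rw [sub_dotProduct]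
    rw [this] at hy2
    linarith
  rw [Finset.sum_sub_distrib, ← Finset.mul_sum] at hsum
  have hS2 : ∑ j ∈ N, ((εj j/2) * (yext j t ⬝ᵥ yext j t))
      = (1/2) * ∑ j ∈ N, εj j * (yext j t ⬝ᵥ yext j t) := by
    rw [Finset.mul_sum]; exact Finset.sum_congr rfl fun j _ => by ring
  rw [hS2] at hsum
  have huq : u t ⬝ᵥ q = u t ⬝ᵥ (q - y) + u t ⬝ᵥ y := by
    rw [dotProduct_sub]; ring
  have hycomm : u t ⬝ᵥ y = u t ⬝ᵥ C.mulVec (x t) := rfl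
  rw [hVdot, huq]
  have hQ : (0:ℝ) ≤ (q - y) ⬝ᵥ (q - y) := dotSq_nonneg' _
  have heps : (1:ℝ)/(2*εii) = εii⁻¹/2 := by field_simp
  rw [heps] at hyu
  linarith [hsum, hyu, h0]
end

section
/- Let L ∈ ℝ^{n×n} be the Laplacian of a strongly connected digraph with positive left null vector γ (γᵀL = 0, γ > 0), let Γ = diag(γ), and let W = diag(ε₁,…,ε_n) with ε_i > 0. Then both ΓL + LᵀΓ and Lᵀ W L are positive semidefinite with null space spanned by the all-ones vector 1. -/
open Matrix

private lemma aux_const {n : ℕ} (S : Matrix (Fin n) (Fin n) ℝ)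
    (hconn : ∀ i j : Fin n, i ≠ j → Relation.TransGen (fun a b => 0 < S b a) i j)
    (x : Fin n → ℝ) (h : ∀ i j, 0 < S i j → x i = x j) : ∃ c, x = fun _ => c := by
  rcases Nat.eq_zero_or_pos n with hn | hn
  · exact ⟨0, funext fun i => absurd i.2 (by omega)⟩
  · have i0 : Fin n := ⟨0, hn⟩
    refine ⟨x i0, funext fun j => ?_⟩
    by_cases hj : j = i0
    · rw [hj]
    · have hg := hconn j i0 hj
      clear hj
      induction hg with
      | single hab => exact (h _ _ hab).symm
      | tail _ hbc ih => exact ih.trans (h _ _ hbc).symm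

/-- Structural fact of Theorem 1: for the Laplacian `L = D − S` of a strongly connected
digraph with positive left null vector `γ`, both `ΓL + LᵀΓ` and `LᵀWL` (with `W = diag(ε)`,
`ε > 0`) are positive semidefinite with null space spanned by the all-ones vector. -/
theorem stmt4 {n : ℕ} (S : Matrix (Fin n) (Fin n) ℝ)
    (hS : ∀ i j, 0 ≤ S i j) (hSdiag : ∀ i, S i i = 0)
    (hconn : ∀ i j : Fin n, i ≠ j → Relation.TransGen (fun a b => 0 < S b a) i j)
    (L : Matrix (Fin n) (Fin n) ℝ)
    (hL : L = Matrix.diagonal (fun i => ∑ j, S i j) - S)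
    (γ : Fin n → ℝ) (hγpos : ∀ i, 0 < γ i) (hγ : γ ᵥ* L = 0)
    (ε : Fin n → ℝ) (hε : ∀ i, 0 < ε i) :
    ((Matrix.diagonal γ * L + Lᵀ * Matrix.diagonal γ).PosSemidef ∧
      ∀ x : Fin n → ℝ,
        (Matrix.diagonal γ * L + Lᵀ * Matrix.diagonal γ).mulVec x = 0 ↔
          ∃ c : ℝ, x = fun _ => c) ∧
    ((Lᵀ * Matrix.diagonal ε * L).PosSemidef ∧
      ∀ x : Fin n → ℝ,
        (Lᵀ * Matrix.diagonal ε * L).mulVec x = 0 ↔ ∃ c : ℝ, x = fun _ => c) := by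
  set d : Fin n → ℝ := fun i => ∑ j, S i j with hd
  have hdi : ∀ i, d i = ∑ j, S i j := fun _ => rfl
  set M : Matrix (Fin n) (Fin n) ℝ := Matrix.diagonal γ * L + Lᵀ * Matrix.diagonal γ with hM
  set N : Matrix (Fin n) (Fin n) ℝ := Lᵀ * Matrix.diagonal ε * L with hN
  -- entries of L
  have hLij : ∀ i j, L i j = (if i = j then d i else 0) - S i j := by
    intro i j; rw [hL]; simp [Matrix.sub_apply, Matrix.diagonal_apply]
  -- column sums weighted by γ
  have hcol : ∀ j, ∑ i, γ i * S i j = γ j * d j := by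
    intro j
    have h0 : (γ ᵥ* L) j = 0 := by rw [hγ]; rfl
    simp only [vecMul, dotProduct, hLij] at h0
    have e : ∀ i, γ i * ((if i = j then d i else 0) - S i j)
        = (if i = j then γ i * d i else 0) - γ i * S i j := by
      intro i; by_cases h : i = j <;> simp [h] <;> ring
    rw [Finset.sum_congr rfl (fun i _ => e i), Finset.sum_sub_distrib,
      Finset.sum_ite_eq' Finset.univ j (fun i => γ i * d i)] at h0
    simp at h0
    linarith
  -- L annihilates constants
  have hL1 : ∀ c : ℝ, L *ᵥ (fun _ => c) = 0 := by
    intro c; funext i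
    have e : ∀ j, ((if i = j then d i else 0) - S i j) * c
        = (if i = j then d i * c else 0) - S i j * c := by
      intro j; split <;> ring
    simp only [mulVec, dotProduct, hLij, Pi.zero_apply, e]
    rw [Finset.sum_sub_distrib, Finset.sum_ite_eq, ← Finset.sum_mul, ← hdi]
    simp
  -- Lᵀ annihilates γ
  have hLtγ : Lᵀ *ᵥ γ = 0 := by rw [mulVec_transpose, hγ]
  -- key quadratic identity for M
  have key : ∀ x : Fin n → ℝ,
      x ⬝ᵥ M *ᵥ x = ∑ i, ∑ j, γ i * S i j * (x i - x j) ^ 2 := by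
    intro x
    have hAij : ∀ i j, M i j = γ i * L i j + L j i * γ j := by
      intro i j
      simp [hM, Matrix.add_apply, Matrix.diagonal_mul, Matrix.mul_diagonal,
        Matrix.transpose_apply]
    have e1 : x ⬝ᵥ M *ᵥ x
        = ∑ i, ∑ j, (γ i * L i j * (x i * x j) + γ j * L j i * (x j * x i)) := by
      simp only [dotProduct, mulVec, Finset.mul_sum, hAij]
      exact Finset.sum_congr rfl fun i _ => Finset.sum_congr rfl fun j _ => by ring
    have swap : (∑ i, ∑ j, γ j * L j i * (x j * x i))
        = ∑ i, ∑ j, γ i * L i j * (x i * x j) := Finset.sum_comm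
    have e2 : x ⬝ᵥ M *ᵥ x = 2 * ∑ i, ∑ j, γ i * L i j * (x i * x j) := by
      rw [e1]
      simp only [Finset.sum_add_distrib]
      rw [swap]; ring
    have eL : ∀ i, ∑ j, γ i * L i j * (x i * x j)
        = γ i * d i * x i ^ 2 - ∑ j, γ i * S i j * (x i * x j) := by
      intro i
      have e : ∀ j, γ i * L i j * (x i * x j)
          = (if i = j then γ i * d i * x i ^ 2 else 0) - γ i * S i j * (x i * x j) := by
        intro j; rw [hLij]; by_cases h : i = j
        · subst h; rw [if_pos rfl, if_pos rfl]; ring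
        · simp only [if_neg h]; ring
      rw [Finset.sum_congr rfl (fun j _ => e j), Finset.sum_sub_distrib,
        Finset.sum_ite_eq]
      simp
    have hA : ∑ i, ∑ j, γ i * S i j * x i ^ 2 = ∑ i, γ i * d i * x i ^ 2 := by
      refine Finset.sum_congr rfl fun i _ => ?_
      rw [hdi i, Finset.mul_sum]
      try rw [Finset.sum_mul]
      try (exact Finset.sum_congr rfl fun j _ => by ring)
    have hB : ∑ i, ∑ j, γ i * S i j * x j ^ 2 = ∑ i, γ i * d i * x i ^ 2 := by
      rw [Finset.sum_comm]
      refine Finset.sum_congr rfl fun j _ => ?_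
      rw [← Finset.sum_mul, hcol j]
      try ring
    have expand : ∑ i, ∑ j, γ i * S i j * (x i - x j) ^ 2
        = (∑ i, ∑ j, γ i * S i j * x i ^ 2) + (∑ i, ∑ j, γ i * S i j * x j ^ 2)
          - 2 * ∑ i, ∑ j, γ i * S i j * (x i * x j) := by
      have e : ∀ i j : Fin n, γ i * S i j * (x i - x j) ^ 2
          = γ i * S i j * x i ^ 2 + γ i * S i j * x j ^ 2
            - 2 * (γ i * S i j * (x i * x j)) := fun i j => by ring
      simp only [e, Finset.sum_add_distrib, Finset.sum_sub_distrib, Finset.mul_sum]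
    rw [e2, expand, hA, hB]
    simp only [eL]
    rw [Finset.sum_sub_distrib]
    ring
  -- key quadratic identity for N
  have keyN : ∀ x : Fin n → ℝ,
      x ⬝ᵥ N *ᵥ x = ∑ i, ε i * ((L *ᵥ x) i) ^ 2 := by
    intro x
    have h1 : N *ᵥ x = Lᵀ *ᵥ (Matrix.diagonal ε *ᵥ (L *ᵥ x)) := by
      rw [hN, ← mulVec_mulVec, ← mulVec_mulVec]
    rw [h1, dotProduct_mulVec, vecMul_transpose]
    simp only [dotProduct, mulVec_diagonal]
    exact Finset.sum_congr rfl fun i _ => by ring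
  -- PSD of M
  have hMH : M.IsHermitian := by
    refine Matrix.ext fun i j => ?_
    simp only [conjTranspose_apply, star_trivial, hM, Matrix.add_apply,
      Matrix.diagonal_mul, Matrix.mul_diagonal, Matrix.transpose_apply]
    ring
  have hMpsd : M.PosSemidef := by
    refine .of_dotProduct_mulVec_nonneg hMH fun x => ?_
    rw [show star x = x from rfl, key]
    exact Finset.sum_nonneg fun i _ => Finset.sum_nonneg fun j _ =>
      mul_nonneg (mul_nonneg (hγpos i).le (hS i j)) (sq_nonneg _)
  -- PSD of N
  have hNH : N.IsHermitian := by
    rw [hN, show Lᵀ = Lᴴ from (conjTranspose_eq_transpose_of_trivial L).symm]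
    exact isHermitian_conjTranspose_mul_mul L (isHermitian_diagonal ε)
  have hNpsd : N.PosSemidef := by
    refine .of_dotProduct_mulVec_nonneg hNH fun x => ?_
    rw [show star x = x from rfl, keyN]
    exact Finset.sum_nonneg fun i _ => mul_nonneg (hε i).le (sq_nonneg _)
  -- quadratic-form-zero implies constant
  have hker : ∀ x : Fin n → ℝ,
      (∑ i, ∑ j, γ i * S i j * (x i - x j) ^ 2) = 0 → ∃ c, x = fun _ => c := by
    intro x hq
    refine aux_const S hconn x fun i j hij => ?_
    have h1 := (Finset.sum_eq_zero_iff_of_nonneg (fun i _ =>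
      Finset.sum_nonneg fun j _ =>
        mul_nonneg (mul_nonneg (hγpos i).le (hS i j)) (sq_nonneg _))).mp hq
    have h2 := (Finset.sum_eq_zero_iff_of_nonneg (fun j _ =>
      mul_nonneg (mul_nonneg (hγpos i).le (hS i j)) (sq_nonneg _))).mp
      (h1 i (Finset.mem_univ i)) j (Finset.mem_univ j)
    have h3 : (x i - x j) ^ 2 = 0 :=
      (mul_eq_zero.mp h2).resolve_left (ne_of_gt (mul_pos (hγpos i) hij))
    have h4 := pow_eq_zero_iff (n := 2) (by norm_num) |>.mp h3
    linarith [sub_eq_zero.mp h4]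
  -- constants are in both kernels
  have hMconst : ∀ c : ℝ, M *ᵥ (fun _ => c) = 0 := by
    intro c
    have hdiagc : Matrix.diagonal γ *ᵥ (fun _ => c) = c • γ := by
      funext i; simp [mulVec_diagonal, mul_comm]
    rw [hM, add_mulVec, ← mulVec_mulVec, ← mulVec_mulVec, hL1 c, mulVec_zero,
      hdiagc, mulVec_smul, hLtγ, smul_zero, add_zero]
  have hNconst : ∀ c : ℝ, N *ᵥ (fun _ => c) = 0 := by
    intro c
    rw [hN, ← mulVec_mulVec, hL1 c, mulVec_zero]
  refine ⟨⟨hMpsd, fun x => ⟨fun hx => ?_, fun ⟨c, hc⟩ => hc ▸ hMconst c⟩⟩,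
    ⟨hNpsd, fun x => ⟨fun hx => ?_, fun ⟨c, hc⟩ => hc ▸ hNconst c⟩⟩⟩
  · refine hker x ?_
    rw [← key, hx, dotProduct_zero]
  · -- N x = 0 → L x = 0 → constant
    have hq : x ⬝ᵥ N *ᵥ x = 0 := by rw [hx, dotProduct_zero]
    rw [keyN] at hq
    have hLx : L *ᵥ x = 0 := by
      funext i
      have h1 := (Finset.sum_eq_zero_iff_of_nonneg (fun i _ =>
        mul_nonneg (hε i).le (sq_nonneg _))).mp hq i (Finset.mem_univ i)
      have h2 : ((L *ᵥ x) i) ^ 2 = 0 :=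
        (mul_eq_zero.mp h1).resolve_left (hε i).ne'
      simpa using pow_eq_zero_iff (n := 2) (by norm_num) |>.mp h2
    refine hker x ?_
    rw [← key]
    have h3 : M *ᵥ x = Lᵀ *ᵥ (Matrix.diagonal γ *ᵥ x) := by
      rw [hM, add_mulVec, ← mulVec_mulVec, ← mulVec_mulVec, hLx, mulVec_zero, zero_add]
    rw [h3, dotProduct_mulVec, vecMul_transpose, hLx]
    simp
end

section
/- Let A₁, A₂ ∈ ℝ^{n×n} be symmetric positive semidefinite with null space spanned by 1, λ_a = λ_max(A₁) > 0, and λ_b > 0 the smallest nonzero eigenvalue of A₂. If 0 ≤ k < λ_b/λ_a and Φ is a diagonal positive semidefinite matrix, then Q = −k A₁ + A₂ + Φ is positive semidefinite, with xᵀQx > 0 for all x outside span{1}, and on span{1} one has 1ᵀQ1 ≥ 0. -/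
open Matrix

-- upper bound by la from IsGreatest
lemma ub {n : ℕ} {A : Matrix (Fin n) (Fin n) ℝ} {la : ℝ}
    (hla : IsGreatest {r : ℝ | ∃ x : Fin n → ℝ, x ⬝ᵥ x = 1 ∧ r = x ⬝ᵥ A.mulVec x} la)
    (y : Fin n → ℝ) : y ⬝ᵥ A.mulVec y ≤ la * (y ⬝ᵥ y) := by
  rcases eq_or_ne y 0 with rfl | hy
  · simp
  · have hpos : 0 < y ⬝ᵥ y := by
      have hnn : 0 ≤ y ⬝ᵥ y := Finset.sum_nonneg fun i _ => mul_self_nonneg (y i)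
      rcases lt_or_eq_of_le hnn with h | h
      · exact h
      · exact absurd (dotProduct_self_eq_zero.mp h.symm) hy
    set s : ℝ := Real.sqrt (y ⬝ᵥ y) with hs
    have hspos : 0 < s := Real.sqrt_pos.mpr hpos
    have hs2 : s * s = y ⬝ᵥ y := Real.mul_self_sqrt hpos.le
    have hu : (s⁻¹ • y) ⬝ᵥ (s⁻¹ • y) = 1 := by
      rw [smul_dotProduct, dotProduct_smul]
      field_simp
      rw [smul_eq_mul, smul_eq_mul, ← hs2, one_div, inv_mul_cancel_left₀ hspos.ne', inv_mul_cancel₀ hspos.ne']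
    have hmem : (s⁻¹ • y) ⬝ᵥ A.mulVec (s⁻¹ • y) ∈
        {r : ℝ | ∃ x : Fin n → ℝ, x ⬝ᵥ x = 1 ∧ r = x ⬝ᵥ A.mulVec x} := ⟨_, hu, rfl⟩
    have hle := hla.2 hmem
    rw [Matrix.mulVec_smul, smul_dotProduct, dotProduct_smul] at hle
    have : s⁻¹ * (s⁻¹ * (y ⬝ᵥ A.mulVec y)) ≤ la := hle
    calc y ⬝ᵥ A.mulVec y = (s*s) * (s⁻¹ * (s⁻¹ * (y ⬝ᵥ A.mulVec y))) := by
          field_simp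
      _ ≤ (s*s) * la := by
          apply mul_le_mul_of_nonneg_left this (by positivity)
      _ = la * (y ⬝ᵥ y) := by rw [hs2]; ring

open Matrix

lemma lbound {n : ℕ} {A : Matrix (Fin n) (Fin n) ℝ} (hAs : A.IsSymm) (hA : A.PosSemidef)
    (hker : ∀ x : Fin n → ℝ, A.mulVec x = 0 ↔ ∃ c : ℝ, x = fun _ => c)
    {lb : ℝ}
    (hlb : IsLeast {r : ℝ | r ≠ 0 ∧ ∃ x : Fin n → ℝ, x ≠ 0 ∧ A.mulVec x = r • x} lb)
    (y : Fin n → ℝ) (hy : (fun _ => (1:ℝ)) ⬝ᵥ y = 0) :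
    lb * (y ⬝ᵥ y) ≤ y ⬝ᵥ A.mulVec y := by
  have hH : A.IsHermitian := hA.1
  set μ : Fin n → ℝ := hH.eigenvalues with hμ
  set c : Fin n → ℝ := fun i => y ⬝ᵥ ⇑(hH.eigenvectorBasis i) with hc
  have key : ∀ z : Fin n → ℝ, y ⬝ᵥ z =
      ∑ i, c i * (⇑(hH.eigenvectorBasis i) ⬝ᵥ z) :=
    fun z => by
      have h := hH.eigenvectorBasis.sum_inner_mul_inner (WithLp.toLp 2 y) (WithLp.toLp 2 z)
      simp only [EuclideanSpace.inner_eq_star_dotProduct, star_trivial] at h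
      rw [dotProduct_comm y z, ← h]
      refine Finset.sum_congr rfl fun i _ => ?_
      rw [hc]; dsimp only; rw [dotProduct_comm y, dotProduct_comm z]
  have step1 : ∀ i, ⇑(hH.eigenvectorBasis i) ⬝ᵥ A.mulVec y = μ i * c i := by
    intro i
    have h1 : ⇑(hH.eigenvectorBasis i) ⬝ᵥ A.mulVec y
        = (A.mulVec ⇑(hH.eigenvectorBasis i)) ⬝ᵥ y := by
      rw [Matrix.dotProduct_mulVec, ← Matrix.mulVec_transpose, hAs.eq]
    rw [h1, hH.mulVec_eigenvectorBasis, smul_dotProduct, smul_eq_mul, hc,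
      dotProduct_comm]
  have hquad : y ⬝ᵥ A.mulVec y = ∑ i, μ i * c i ^ 2 := by
    rw [key (A.mulVec y)]
    exact Finset.sum_congr rfl fun i _ => by rw [step1 i]; ring
  have hnorm : y ⬝ᵥ y = ∑ i, c i ^ 2 := by
    rw [key y]
    exact Finset.sum_congr rfl fun i _ => by
      rw [hc]; simp only; rw [dotProduct_comm]; ring
  rw [hquad, hnorm, Finset.mul_sum]
  apply Finset.sum_le_sum
  intro i _
  rcases eq_or_ne (μ i) 0 with h0 | h0
  · have hev : A.mulVec ⇑(hH.eigenvectorBasis i) = 0 := by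
      rw [hH.mulVec_eigenvectorBasis]
      show μ i • _ = 0
      rw [h0, zero_smul]
    obtain ⟨d, hd⟩ := (hker _).mp hev
    have hci : c i = 0 := by
      rw [hc]; simp only; rw [hd]
      have h2 : y ⬝ᵥ (fun _ => d : Fin n → ℝ) = d * ((fun _ => (1:ℝ)) ⬝ᵥ y) := by
        simp [dotProduct, Finset.mul_sum, mul_comm]
      rw [h2, hy, mul_zero]
    rw [hci]
    simp
  · have hne : ⇑(hH.eigenvectorBasis i) ≠ (0 : Fin n → ℝ) := by
      intro h
      exact hH.eigenvectorBasis.orthonormal.ne_zero i (by ext j; exact congrFun h j)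
    have hge : lb ≤ μ i := hlb.2 ⟨h0, ⇑(hH.eigenvectorBasis i), hne,
      hH.mulVec_eigenvectorBasis i⟩
    exact mul_le_mul_of_nonneg_right hge (sq_nonneg _)
open Matrix

lemma decomp' {n : ℕ} {A : Matrix (Fin n) (Fin n) ℝ} (hAs : A.IsSymm) (m : ℝ)
    (h0 : A.mulVec (fun _ => m) = 0) (x : Fin n → ℝ) :
    x ⬝ᵥ A.mulVec x = (x - fun _ => m) ⬝ᵥ A.mulVec (x - fun _ => m) := by
  have hx : A.mulVec (x - fun _ => m) = A.mulVec x := by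
    rw [Matrix.mulVec_sub, h0, sub_zero]
  rw [hx, sub_dotProduct]
  have h1 : (fun _ => m : Fin n → ℝ) ⬝ᵥ A.mulVec x = (A.mulVec (fun _ => m)) ⬝ᵥ x := by
    rw [Matrix.dotProduct_mulVec, ← Matrix.mulVec_transpose, hAs.eq]
  rw [h1, h0, zero_dotProduct, sub_zero]

/-- Case (i) of Theorem 1: with `A₁, A₂` symmetric PSD having null space `span{1}`,
`λ_a = λ_max(A₁) > 0`, `λ_b > 0` the smallest nonzero eigenvalue of `A₂`,
`0 ≤ k < λ_b/λ_a`, and `Φ` a diagonal PSD matrix, `Q = −kA₁ + A₂ + Φ` is positive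
semidefinite, `xᵀQx > 0` for every `x` outside `span{1}`, and `1ᵀQ1 ≥ 0`. -/
theorem stmt6 {n : ℕ} (hn : 0 < n)
    (A₁ A₂ : Matrix (Fin n) (Fin n) ℝ) (hA₁s : A₁.IsSymm) (hA₂s : A₂.IsSymm)
    (hA₁ : A₁.PosSemidef) (hA₂ : A₂.PosSemidef)
    (hker₁ : ∀ x : Fin n → ℝ, A₁.mulVec x = 0 ↔ ∃ c : ℝ, x = fun _ => c)
    (hker₂ : ∀ x : Fin n → ℝ, A₂.mulVec x = 0 ↔ ∃ c : ℝ, x = fun _ => c)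
    (la lb : ℝ) (hlapos : 0 < la) (hlbpos : 0 < lb)
    (hla : IsGreatest {r : ℝ | ∃ x : Fin n → ℝ, x ⬝ᵥ x = 1 ∧ r = x ⬝ᵥ A₁.mulVec x} la)
    (hlb : IsLeast {r : ℝ | r ≠ 0 ∧ ∃ x : Fin n → ℝ, x ≠ 0 ∧ A₂.mulVec x = r • x} lb)
    (k : ℝ) (hk0 : 0 ≤ k) (hk : k < lb / la)
    (φ : Fin n → ℝ) (hφ : ∀ i, 0 ≤ φ i) :
    ((-k) • A₁ + A₂ + Matrix.diagonal φ).PosSemidef ∧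
    (∀ x : Fin n → ℝ, (∀ c : ℝ, x ≠ fun _ => c) →
      0 < x ⬝ᵥ ((-k) • A₁ + A₂ + Matrix.diagonal φ).mulVec x) ∧
    0 ≤ (fun _ => (1 : ℝ)) ⬝ᵥ
        ((-k) • A₁ + A₂ + Matrix.diagonal φ).mulVec (fun _ => 1) := by
  set Q : Matrix (Fin n) (Fin n) ℝ := (-k) • A₁ + A₂ + Matrix.diagonal φ with hQ
  have hklb : k * la < lb := (lt_div_iff₀ hlapos).mp hk
  have hdiagPSD : (Matrix.diagonal φ).PosSemidef := Matrix.posSemidef_diagonal_iff.mpr hφ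
  have hdiag : ∀ x : Fin n → ℝ, 0 ≤ x ⬝ᵥ (Matrix.diagonal φ).mulVec x := by
    intro x
    have := hdiagPSD.dotProduct_mulVec_nonneg x
    simpa using this
  have hexp : ∀ x : Fin n → ℝ, x ⬝ᵥ Q.mulVec x =
      -(k * (x ⬝ᵥ A₁.mulVec x)) + x ⬝ᵥ A₂.mulVec x + x ⬝ᵥ (Matrix.diagonal φ).mulVec x := by
    intro x
    rw [hQ, Matrix.add_mulVec, Matrix.add_mulVec, Matrix.smul_mulVec,
      dotProduct_add, dotProduct_add, dotProduct_smul]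
    simp [neg_mul]
  -- core bound
  have core : ∀ x : Fin n → ℝ, ∀ m : ℝ,
      (fun _ => (1:ℝ)) ⬝ᵥ (x - fun _ => m) = 0 →
      (lb - k * la) * ((x - fun _ => m) ⬝ᵥ (x - fun _ => m)) ≤ x ⬝ᵥ Q.mulVec x := by
    intro x m hm
    set y : Fin n → ℝ := x - fun _ => m with hy
    have h01 : A₁.mulVec (fun _ => m) = 0 := (hker₁ _).mpr ⟨m, rfl⟩
    have h02 : A₂.mulVec (fun _ => m) = 0 := (hker₂ _).mpr ⟨m, rfl⟩
    have e1 : x ⬝ᵥ A₁.mulVec x = y ⬝ᵥ A₁.mulVec y := decomp' hA₁s m h01 x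
    have e2 : x ⬝ᵥ A₂.mulVec x = y ⬝ᵥ A₂.mulVec y := decomp' hA₂s m h02 x
    have hub := ub hla y
    have hlbd := lbound hA₂s hA₂ hker₂ hlb y hm
    have hd := hdiag x
    rw [hexp, e1, e2]
    nlinarith [mul_nonneg hk0 (sub_nonneg.mpr hub)]
  -- mean construction
  have hmean : ∀ x : Fin n → ℝ,
      (fun _ => (1:ℝ)) ⬝ᵥ (x - fun _ => (∑ i, x i) / n) = 0 := by
    intro x
    have hn' : (n : ℝ) ≠ 0 := Nat.cast_ne_zero.mpr hn.ne'
    simp only [dotProduct, Pi.sub_apply, one_mul]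
    rw [Finset.sum_sub_distrib]
    simp [Finset.sum_const, hn']
    field_simp
    ring
  have hyynn : ∀ y : Fin n → ℝ, 0 ≤ y ⬝ᵥ y :=
    fun y => Finset.sum_nonneg fun i _ => mul_self_nonneg (y i)
  have hQnn : ∀ x : Fin n → ℝ, 0 ≤ x ⬝ᵥ Q.mulVec x := by
    intro x
    have := core x ((∑ i, x i) / n) (hmean x)
    have h2 : 0 ≤ (lb - k * la) * ((x - fun _ => (∑ i, x i) / n) ⬝ᵥ (x - fun _ => (∑ i, x i) / n)) :=
      mul_nonneg (by linarith) (hyynn _)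
    linarith
  refine ⟨PosSemidef.of_dotProduct_mulVec_nonneg ?_ fun x => by simpa using hQnn x, ?_, ?_⟩
  · -- Hermitian
    rw [Matrix.IsHermitian, Matrix.conjTranspose_eq_transpose_of_trivial]
    exact ((hA₁s.smul (-k)).add hA₂s).add (Matrix.isSymm_diagonal φ) |>.eq
  · intro x hx
    set m : ℝ := (∑ i, x i) / n with hm
    have hy0 : (x - fun _ => m) ≠ 0 := by
      intro h
      exact hx m (by funext i; have := congrFun h i; simpa [sub_eq_zero] using this)
    have hyy : 0 < (x - fun _ => m) ⬝ᵥ (x - fun _ => m) := by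
      rcases lt_or_eq_of_le (hyynn (x - fun _ => m)) with h | h
      · exact h
      · exact absurd (dotProduct_self_eq_zero.mp h.symm) hy0
    have := core x m (hmean x)
    nlinarith
  · have h01 : A₁.mulVec (fun _ => (1:ℝ)) = 0 := (hker₁ _).mpr ⟨1, rfl⟩
    have h02 : A₂.mulVec (fun _ => (1:ℝ)) = 0 := (hker₂ _).mpr ⟨1, rfl⟩
    rw [hexp, h01, h02]
    simpa using hdiag (fun _ => (1:ℝ))
end

section
/- Let M′, N, N′ be symmetric n×n matrices with M′ negative semidefinite and N positive semidefinite with ‖N‖ > 0, and let Δ ≥ 0 be a real number. If Δ ≤ (−‖N′‖ + √(‖N′‖² + 4‖N‖(−λ_max(M′))))/(2‖N‖), then M′ + Δ² N + Δ N″ is negative semidefinite for every symmetric N″ with ‖N″‖ ≤ ‖N′‖. -/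
open Matrix

/-- Robustness bound of Section IV.C: if `M′ ≤ 0` with largest eigenvalue `λ_max(M′)`,
`N ≥ 0` with spectral norm `‖N‖ > 0`, and
`Δ ≤ (−‖N′‖ + √(‖N′‖² + 4‖N‖(−λ_max(M′))))/(2‖N‖)`, then `M′ + Δ²N + ΔN″ ≤ 0`
for every symmetric `N″` with `‖N″‖ ≤ ‖N′‖`. Spectral norms and `λ_max` of the
symmetric matrices are characterized via Rayleigh quotients over unit vectors. -/
theorem stmt9 {n : ℕ} (M' N : Matrix (Fin n) (Fin n) ℝ)
    (hM's : M'.IsSymm) (hNs : N.IsSymm)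
    (hM' : (-M').PosSemidef) (hN : N.PosSemidef)
    (lm nN nN' : ℝ)
    (hlm : IsGreatest {r : ℝ | ∃ x : Fin n → ℝ, x ⬝ᵥ x = 1 ∧ r = x ⬝ᵥ M'.mulVec x} lm)
    (hnN : IsGreatest {r : ℝ | ∃ x : Fin n → ℝ, x ⬝ᵥ x = 1 ∧ r = |x ⬝ᵥ N.mulVec x|} nN)
    (hnNpos : 0 < nN) (hnN' : 0 ≤ nN')
    (Δ : ℝ) (hΔ0 : 0 ≤ Δ)
    (hΔ : Δ ≤ (-nN' + Real.sqrt (nN' ^ 2 + 4 * nN * (-lm))) / (2 * nN)) :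
    ∀ N'' : Matrix (Fin n) (Fin n) ℝ, N''.IsSymm →
      (∀ x : Fin n → ℝ, x ⬝ᵥ x = 1 → |x ⬝ᵥ N''.mulVec x| ≤ nN') →
      (-(M' + Δ ^ 2 • N + Δ • N'')).PosSemidef := by
  intro N'' hN''s hN''b
  -- lm ≤ 0
  obtain ⟨x0, hx0, hx0eq⟩ := hlm.1
  have hlm0 : lm ≤ 0 := by
    have := hM'.dotProduct_mulVec_nonneg x0
    simp only [star_trivial, neg_mulVec, dotProduct_neg] at this
    rw [hx0eq]; linarith
  -- key scalar inequality
  have harg : 0 ≤ nN' ^ 2 + 4 * nN * (-lm) := by nlinarith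
  have hs := Real.sq_sqrt harg
  have hsnn := Real.sqrt_nonneg (nN' ^ 2 + 4 * nN * (-lm))
  have hkey : Δ ^ 2 * nN + Δ * nN' + lm ≤ 0 := by
    rw [le_div_iff₀ (by linarith)] at hΔ
    have h1 : 2 * nN * Δ + nN' ≤ Real.sqrt (nN' ^ 2 + 4 * nN * (-lm)) := by linarith
    have h2 : (2 * nN * Δ + nN') ^ 2 ≤ Real.sqrt (nN' ^ 2 + 4 * nN * (-lm)) ^ 2 := by
      apply pow_le_pow_left₀ (by positivity) h1
    nlinarith
  -- quadratic form bound for arbitrary x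
  have hform : ∀ x : Fin n → ℝ, x ⬝ᵥ (M' + Δ ^ 2 • N + Δ • N'') *ᵥ x ≤ 0 := by
    intro x
    rcases eq_or_ne (x ⬝ᵥ x) 0 with hc | hc
    · -- x ⬝ᵥ x = 0 ⇒ x = 0
      have hx0' : x = 0 := by
        by_contra h
        exact h (funext fun i => by
          have := (dotProduct_self_eq_zero (v := x)).mp hc
          exact congrFun this i)
      simp [hx0']
    · have hcpos : 0 < x ⬝ᵥ x := lt_of_le_of_ne (Finset.sum_nonneg fun i _ => mul_self_nonneg (x i)) (Ne.symm hc)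
      set c := x ⬝ᵥ x with hcdef
      set a := (Real.sqrt c)⁻¹ with hadef
      have hsc : Real.sqrt c > 0 := Real.sqrt_pos.mpr hcpos
      have ha2 : a ^ 2 = c⁻¹ := by
        rw [hadef, ← Real.sqrt_inv, Real.sq_sqrt (by positivity)]
      set y := a • x with hydef
      have hyy : y ⬝ᵥ y = 1 := by
        rw [hydef, smul_dotProduct, dotProduct_smul, smul_eq_mul, smul_eq_mul, ← mul_assoc,
          ← pow_two, ha2, ← hcdef, inv_mul_cancel₀ hc]
      have hquad : ∀ A : Matrix (Fin n) (Fin n) ℝ, x ⬝ᵥ A *ᵥ x = c * (y ⬝ᵥ A *ᵥ y) := by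
        intro A
        have h1 : y ⬝ᵥ A *ᵥ y = a ^ 2 * (x ⬝ᵥ A *ᵥ x) := by
          rw [hydef, smul_dotProduct, mulVec_smul, dotProduct_smul, smul_eq_mul, smul_eq_mul]
          ring
        rw [h1, ha2, ← mul_assoc, mul_inv_cancel₀ hc, one_mul]
      have hb1 : y ⬝ᵥ M' *ᵥ y ≤ lm := hlm.2 ⟨y, hyy, rfl⟩
      have hb2 : y ⬝ᵥ N *ᵥ y ≤ nN := le_trans (le_abs_self _) (hnN.2 ⟨y, hyy, rfl⟩)
      have hb3 : y ⬝ᵥ N'' *ᵥ y ≤ nN' := le_trans (le_abs_self _) (hN''b y hyy)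
      have hexp : x ⬝ᵥ (M' + Δ ^ 2 • N + Δ • N'') *ᵥ x
          = x ⬝ᵥ M' *ᵥ x + Δ ^ 2 * (x ⬝ᵥ N *ᵥ x) + Δ * (x ⬝ᵥ N'' *ᵥ x) := by
        simp [add_mulVec, smul_mulVec, dotProduct_add, dotProduct_smul]
      rw [hexp, hquad M', hquad N, hquad N'']
      have hΔ2 : 0 ≤ Δ ^ 2 := sq_nonneg Δ
      nlinarith [mul_le_mul_of_nonneg_left hb1 hcpos.le,
        mul_le_mul_of_nonneg_left hb2 hcpos.le,
        mul_le_mul_of_nonneg_left hb3 hcpos.le,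
        mul_nonneg hcpos.le hΔ2]
  rw [posSemidef_iff_dotProduct_mulVec]
  constructor
  · show (-(M' + Δ ^ 2 • N + Δ • N''))ᴴ = _
    rw [conjTranspose_eq_transpose_of_trivial]
    simp [transpose_add, transpose_smul, hM's.eq, hNs.eq, hN''s.eq]
  · intro x
    have := hform (star x)
    simp only [star_trivial] at *
    rw [neg_mulVec, dotProduct_neg]
    linarith
end
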